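/- Let G = G₁ +_u G₂ +_u ⋯ +_u G_k be the vertex-sum of pairwise disjoint graphs at vertices uᵢ ∈ V(Gᵢ), with central vertex u, and let Dᵢ be a strong dominating set of Gᵢ for each i. Then D = (⋃_{i=1}^{k} Dᵢ) ∪ {u} (viewed in G, with each uᵢ replaced by u) is a strong dominating set of G. -/

import Mathlib

/-- Degree of a vertex: number of neighbors. -/
noncomputable def deg {V : Type*} (G : SimpleGraph V) (v : V) : ℕ :=
  Nat.card (G.neighborSet v)

/-- `D` is a strong dominating set of `G`. -/
def IsStrongDomSet {V : Type*} (G : SimpleGraph V) (D : Set V) : Prop :=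
  ∀ x ∉ D, ∃ y ∈ D, G.Adj x y ∧ deg G x ≤ deg G y

/-- `D` is a dominating set of `G`. -/
def IsDomSet {V : Type*} (G : SimpleGraph V) (D : Set V) : Prop :=
  ∀ x ∉ D, ∃ y ∈ D, G.Adj x y

/-- The strong domination number. -/
noncomputable def gammaSt {V : Type*} (G : SimpleGraph V) : ℕ :=
  sInf {n | ∃ D : Set V, IsStrongDomSet G D ∧ D.ncard = n}

/-- The domination number. -/
noncomputable def gammaDom {V : Type*} (G : SimpleGraph V) : ℕ :=
  sInf {n | ∃ D : Set V, IsDomSet G D ∧ D.ncard = n}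

/-- The vertex-sum of the disjoint graphs `G i` at the vertices `u i`:
`none` is the central vertex obtained by identifying all the `u i`. -/
def vertexSum {V : Type*} {k : ℕ} (G : Fin k → SimpleGraph V) (u : Fin k → V) :
    SimpleGraph (Option (Σ i : Fin k, {v : V // v ≠ u i})) where
  Adj a b :=
    match a, b with
    | none, none => False
    | none, some ⟨i, v⟩ => (G i).Adj (u i) v.val
    | some ⟨i, v⟩, none => (G i).Adj (u i) v.val
    | some ⟨i, v⟩, some ⟨j, w⟩ => i = j ∧ (G i).Adj v.val w.val
  symm := by
    constructor
    intro a b h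
    match a, b with
    | none, none => exact h.elim
    | none, some ⟨i, v⟩ => exact h
    | some ⟨i, v⟩, none => exact h
    | some ⟨i, v⟩, some ⟨j, w⟩ => obtain ⟨rfl, ha⟩ := h; exact ⟨rfl, ha.symm⟩
  loopless := by
    constructor
    intro a h
    match a with
    | none => exact h.elim
    | some ⟨i, v⟩ => exact (G i).irrefl h.2


section Aux
open Classical
variable {V : Type*} [Fintype V] {k : ℕ} (G : Fin k → SimpleGraph V) (u : Fin k → V)

/-- The embedding of `V` (for branch `i`) into the vertex-sum. -/
noncomputable def vsEmb (i : Fin k) (w : V) : Option (Σ i : Fin k, {v : V // v ≠ u i}) :=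
  if h : w = u i then none else some ⟨i, ⟨w, h⟩⟩

lemma vsEmb_inj (i : Fin k) : Function.Injective (vsEmb u i) := by
  intro a b hab
  unfold vsEmb at hab
  by_cases ha : a = u i <;> by_cases hb : b = u i
  · rw [ha, hb]
  · simp [ha, hb] at hab
  · simp [ha, hb] at hab
  · simp only [ha, hb, dif_neg, not_false_iff, Option.some.injEq] at hab
    exact congrArg (fun p : (Σ i : Fin k, {v : V // v ≠ u i}) => p.2.val) hab

lemma neighborSet_some (i : Fin k) (v : {v : V // v ≠ u i}) :
    (vertexSum G u).neighborSet (some ⟨i, v⟩) = vsEmb u i '' ((G i).neighborSet v.val) := by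
  ext x
  constructor
  · intro hx
    match x with
    | none =>
      refine ⟨u i, ?_, ?_⟩
      · exact (hx : (G i).Adj (u i) v.val).symm
      · simp [vsEmb]
    | some ⟨j, w⟩ =>
      obtain ⟨rfl, hadj⟩ := (hx : i = j ∧ (G i).Adj v.val w.val)
      exact ⟨w.val, hadj, by simp [vsEmb, w.prop]⟩
  · rintro ⟨w, hw, rfl⟩
    unfold vsEmb
    by_cases h : w = u i
    · subst h
      simp only [dif_pos rfl]
      exact (hw : (G i).Adj v.val (u i)).symm
    · simp only [dif_neg h]
      exact ⟨rfl, hw⟩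

lemma deg_some (i : Fin k) (v : {v : V // v ≠ u i}) :
    deg (vertexSum G u) (some ⟨i, v⟩) = deg (G i) v.val := by
  unfold deg
  rw [neighborSet_some]
  exact Nat.card_image_of_injective (vsEmb_inj u i) _

lemma deg_none_ge (i : Fin k) :
    deg (G i) (u i) ≤ deg (vertexSum G u) none := by
  unfold deg
  have hsub : vsEmb u i '' ((G i).neighborSet (u i)) ⊆ (vertexSum G u).neighborSet none := by
    rintro x ⟨w, hw, rfl⟩
    have hne : w ≠ u i := fun h => (G i).loopless.irrefl (u i) (h ▸ hw)
    simp only [vsEmb, dif_neg hne]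
    exact (hw : (G i).Adj (u i) w)
  calc Nat.card ((G i).neighborSet (u i))
      = Nat.card (vsEmb u i '' ((G i).neighborSet (u i))) :=
        (Nat.card_image_of_injective (vsEmb_inj u i) _).symm
    _ ≤ Nat.card ((vertexSum G u).neighborSet none) :=
        Nat.card_mono (Set.toFinite _) hsub

end Aux

/-- The union of strong dominating sets of the `Gᵢ` together with the central vertex is a
strong dominating set of the vertex-sum. -/
theorem stmt13 {V : Type*} [Fintype V] {k : ℕ}
    (G : Fin k → SimpleGraph V) (u : Fin k → V)
    (D : ∀ i : Fin k, Set V) (hD : ∀ i, IsStrongDomSet (G i) (D i)) :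
    IsStrongDomSet (vertexSum G u)
      (insert none {p | ∃ (i : Fin k) (v : {v : V // v ≠ u i}),
        p = some ⟨i, v⟩ ∧ v.val ∈ D i}) := by
  intro x hx
  match x with
  | none => exact absurd (Set.mem_insert _ _) hx
  | some ⟨i, v⟩ =>
    have hv : v.val ∉ D i := by
      intro hvD
      exact hx (Set.mem_insert_of_mem _ ⟨i, v, rfl, hvD⟩)
    obtain ⟨y, hyD, hadj, hdeg⟩ := hD i v.val hv
    by_cases hy : y = u i
    · subst hy
      refine ⟨none, Set.mem_insert _ _, ?_, ?_⟩
      · exact hadj.symm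
      · rw [deg_some]
        exact hdeg.trans (deg_none_ge G u i)
    · refine ⟨some ⟨i, ⟨y, hy⟩⟩, Set.mem_insert_of_mem _ ⟨i, ⟨y, hy⟩, rfl, hyD⟩, ?_, ?_⟩
      · exact ⟨rfl, hadj⟩
      · rw [deg_some, deg_some]
        exact hdeg
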